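/- arXiv:2310.13406 — 2 statements merged into one kernel-verified Lean document; each statement's English description precedes it below -/
import Mathlib

section
/- If A(S,N) solves the Popov equation ∂²A/∂N² + 2i ∂A/∂S + 4γNSA = 0, then the function Ã(X,Y) defined by Ã(S, N - γS³/3) = exp(-i(γNS² - γ²S⁵/10)) A(S,N) solves the parabolic wave equation ∂²Ã/∂Y² + 2i ∂Ã/∂X = 0. -/
open Complex

/-! With `N = Y + γX³/3` the shear gives `∂_Y Ã = ∂_N G` and `∂_X Ã = ∂_S G + γS² ∂_N G` for
`G(S, N) = exp(θ(S, N)) A(S, N)`, `θ = -i(γNS² - γ²S⁵/10)`. Since `∂_N θ = -iγS²` is independent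
of `N`, the gauge factor `exp θ` is chosen so that `∂_N²G + 2i ∂_S G + 2iγS² ∂_N G` equals
`exp θ` times the Popov operator applied to `A`: the first-order terms in `∂_N A` cancel, and the
zeroth-order coefficient `(∂_N θ)² + 2i ∂_S θ + 2iγS² ∂_N θ` is exactly `4γNS`. -/

theorem hasDerivAt_cexp_mul {θ g : ℝ → ℂ} {θ' g' : ℂ} {x : ℝ} (hθ : HasDerivAt θ θ' x)
    (hg : HasDerivAt g g' x) :
    HasDerivAt (fun t => cexp (θ t) * g t) (cexp (θ x) * (θ' * g x + g')) x :=
  (hθ.cexp.mul hg).congr_deriv (by ring)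

theorem hasDerivAt_apply_add_apply {E : Type*} [NormedAddCommGroup E] [NormedSpace ℝ E]
    {F : ℝ → ℝ → E} {u : ℝ → ℝ} {u' x y : ℝ}
    (hF : DifferentiableAt ℝ (fun p : ℝ × ℝ => F p.1 p.2) (x, y + u x)) (hu : HasDerivAt u u' x) :
    HasDerivAt (fun s => F s (y + u s))
      (deriv (fun s => F s (y + u x)) x + u' • deriv (F x) (y + u x)) x := by
  set n := y + u x
  set L := fderiv ℝ (fun p : ℝ × ℝ => F p.1 p.2) (x, n)
  have hS : HasDerivAt (fun s => F s n) (L (1, 0)) x := by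
    simpa [Function.comp_def] using
      hF.hasFDerivAt.comp_hasDerivAt x ((hasDerivAt_id x).prodMk (hasDerivAt_const x n))
  have hN : HasDerivAt (F x) (L (0, 1)) n := by
    simpa [Function.comp_def] using
      hF.hasFDerivAt.comp_hasDerivAt n ((hasDerivAt_const n x).prodMk (hasDerivAt_id n))
  have hcurve : HasDerivAt (fun s => (s, y + u s)) ((1, 0) + u' • (0, 1) : ℝ × ℝ) x := by
    simpa using (hasDerivAt_id x).prodMk (hu.const_add y)
  rw [hS.deriv, hN.deriv, ← map_smul, ← map_add]
  exact hF.hasFDerivAt.comp_hasDerivAt x hcurve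

noncomputable section

def popovPhase (γ S N : ℝ) : ℂ := -I * ((γ : ℂ) * N * S ^ 2 - (γ : ℂ) ^ 2 * S ^ 5 / 10)

def popovGauge (γ : ℝ) (A : ℝ → ℝ → ℂ) (S N : ℝ) : ℂ := cexp (popovPhase γ S N) * A S N

end

theorem hasDerivAt_popovPhase_snd (γ S N : ℝ) :
    HasDerivAt (popovPhase γ S) (-I * γ * S ^ 2) N := by
  have := ((((hasDerivAt_id N).ofReal_comp.const_mul (γ : ℂ)).mul_const ((S : ℂ) ^ 2)).sub_const
    ((γ : ℂ) ^ 2 * S ^ 5 / 10)).const_mul (-I)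
  exact this.congr_deriv (by push_cast; ring)

theorem hasDerivAt_popovPhase_fst (γ S N : ℝ) :
    HasDerivAt (fun s => popovPhase γ s N) (-I * (2 * γ * N * S - γ ^ 2 * S ^ 4 / 2)) S := by
  have hpow (k : ℕ) : HasDerivAt (fun s : ℝ => (s : ℂ) ^ k) (k * (S : ℂ) ^ (k - 1)) S :=
    (hasDerivAt_pow k (S : ℂ)).comp_ofReal
  have := (((hpow 2).const_mul ((γ : ℂ) * N)).sub
    (((hpow 5).const_mul ((γ : ℂ) ^ 2)).div_const 10)).const_mul (-I)
  exact this.congr_deriv (by push_cast; ring)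

section

variable (γ : ℝ) {A : ℝ → ℝ → ℂ} (hA : ContDiff ℝ 2 (fun p : ℝ × ℝ => A p.1 p.2))
include hA

theorem differentiable_popovGauge :
    Differentiable ℝ (fun p : ℝ × ℝ => popovGauge γ A p.1 p.2) := by
  have := hA.differentiable (by norm_num)
  unfold popovGauge popovPhase
  fun_prop

theorem popovGauge_equation (S N : ℝ) :
    deriv (deriv (popovGauge γ A S)) N + 2 * I * deriv (fun s => popovGauge γ A s N) S
        + 2 * I * γ * S ^ 2 * deriv (popovGauge γ A S) N
      = cexp (popovPhase γ S N) * (deriv (deriv (A S)) N + 2 * I * deriv (fun s => A s N) S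
        + 4 * γ * N * S * A S N) := by
  have hslice : ContDiff ℝ (1 + 1) (A S) := hA.comp (contDiff_const.prodMk contDiff_id)
  obtain ⟨hA1, -, hA2⟩ := contDiff_succ_iff_deriv.mp hslice
  have hAS : DifferentiableAt ℝ (fun s => A s N) S := by
    have := hA.differentiable (by norm_num)
    fun_prop
  set a : ℂ := -I * γ * S ^ 2
  have hG1 (n : ℝ) : HasDerivAt (popovGauge γ A S)
      (cexp (popovPhase γ S n) * (a * A S n + deriv (A S) n)) n :=
    hasDerivAt_cexp_mul (hasDerivAt_popovPhase_snd γ S n) (hA1 n).hasDerivAt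
  have hG2 : HasDerivAt (deriv (popovGauge γ A S)) (cexp (popovPhase γ S N)
      * (a * (a * A S N + deriv (A S) N) + (a * deriv (A S) N + deriv (deriv (A S)) N))) N := by
    rw [funext fun n => (hG1 n).deriv]
    exact hasDerivAt_cexp_mul (hasDerivAt_popovPhase_snd γ S N)
      (((hA1 N).hasDerivAt.const_mul a).add ((hA2.differentiable one_ne_zero) N).hasDerivAt)
  have hGS : HasDerivAt (fun s => popovGauge γ A s N) _ S :=
    hasDerivAt_cexp_mul (hasDerivAt_popovPhase_fst γ S N) hAS.hasDerivAt
  rw [hG2.deriv, (hG1 N).deriv, hGS.deriv]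
  linear_combination (-4 * γ * N * S * cexp (popovPhase γ S N) * A S N) * I_sq

end

theorem popov_to_parabolic_general (γ : ℝ)
    (A Atil : ℝ → ℝ → ℂ)
    (hA : ContDiff ℝ 2 (fun p : ℝ × ℝ => A p.1 p.2))
    (hPopov : ∀ S N : ℝ,
      deriv (fun n => deriv (fun n' => A S n') n) N
        + 2 * I * deriv (fun s => A s N) S
        + 4 * (γ : ℂ) * (N : ℂ) * (S : ℂ) * A S N = 0)
    (hdef : ∀ S N : ℝ,
      Atil S (N - γ * S ^ 3 / 3)
        = Complex.exp (-I * ((γ : ℂ) * N * S ^ 2 - (γ : ℂ) ^ 2 * S ^ 5 / 10)) * A S N) :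
    ∀ X Y : ℝ,
      deriv (fun y => deriv (fun y' => Atil X y') y) Y
        + 2 * I * deriv (fun x => Atil x Y) X = 0 := by
  intro X Y
  have hAtil : Atil = fun x y => popovGauge γ A x (y + γ * x ^ 3 / 3) := by
    ext x y
    have h := hdef x (y + γ * x ^ 3 / 3)
    rwa [add_sub_cancel_right] at h
  subst hAtil
  have hshear := hasDerivAt_apply_add_apply (F := popovGauge γ A) (y := Y) (u' := γ * X ^ 2)
    (differentiable_popovGauge γ hA _)
    ((((hasDerivAt_pow 3 X).const_mul γ).div_const 3).congr_deriv (by ring))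
  simp only [deriv_comp_add_const, hshear.deriv, Complex.real_smul, Complex.ofReal_mul,
    Complex.ofReal_pow]
  linear_combination popovGauge_equation γ hA X (Y + γ * X ^ 3 / 3)
    + cexp (popovPhase γ X (Y + γ * X ^ 3 / 3)) * hPopov X (Y + γ * X ^ 3 / 3)

/-- If `A` solves the Popov equation
`∂²A/∂N² + 2i ∂A/∂S + 4γNS A = 0`, then `Ã(X,Y) := exp(-i(γNX² - γ²X⁵/10)) A(X, Y + γX³/3)`
(with `N = Y + γX³/3`), i.e. `Ã(S, N - γS³/3) = exp(-i(γNS² - γ²S⁵/10)) A(S,N)`,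
solves the parabolic wave equation `∂²Ã/∂Y² + 2i ∂Ã/∂X = 0`. -/
theorem popov_to_parabolic (γ : ℝ) (hγ : 0 < γ)
    (A Atil : ℝ → ℝ → ℂ)
    (hA : ContDiff ℝ 2 (fun p : ℝ × ℝ => A p.1 p.2))
    (hPopov : ∀ S N : ℝ,
      deriv (fun n => deriv (fun n' => A S n') n) N
        + 2 * I * deriv (fun s => A s N) S
        + 4 * (γ : ℂ) * (N : ℂ) * (S : ℂ) * A S N = 0)
    (hdef : ∀ S N : ℝ,
      Atil S (N - γ * S ^ 3 / 3)
        = Complex.exp (-I * ((γ : ℂ) * N * S ^ 2 - (γ : ℂ) ^ 2 * S ^ 5 / 10)) * A S N) :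
    ∀ X Y : ℝ,
      deriv (fun y => deriv (fun y' => Atil X y') y) Y
        + 2 * I * deriv (fun x => Atil x Y) X = 0 :=
  popov_to_parabolic_general γ A Atil hA hPopov hdef
end

section
/- The function Ã₃₂(X,Y) = ∫_{Γ₃₂} t·exp(i(-Yt² - Xt⁴/2 + 4t⁵/(15√γ))) dt, where Γ₃₂ is a contour from e^{i9π/10}∞ to i∞, is well defined (the integral converges absolutely along such a contour for large |t|) and satisfies the parabolic wave equation ∂²Ã₃₂/∂Y² + 2i ∂Ã₃₂/∂X = 0. -/
/-!
On both rays `t⁵` lies on the positive imaginary axis, so along the contour the quintic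
term of the exponent has real part at most `K - c|u|⁵` with `c = 4/(15√γ) > 0`. This beats
the at most quartic growth of the other terms and any polynomial weight, which gives
integrable dominating functions, uniform for the parameters in a neighbourhood; hence the
integral converges absolutely and may be differentiated under the integral sign.
Differentiating the exponential multiplies the integrand by `-i t²` in `Y` and by `-i t⁴/2`
in `X`, and `(-i t²)² + 2i · (-i t⁴/2) = 0`.
-/

open Real Complex MeasureTheory Filter

theorem mul_one_add_pow_four_le_mul_pow_five {B c x : ℝ} (hB : 0 ≤ B) (hc : 0 < c)
    (hx₁ : 1 ≤ x) (hx : 16 * B / c ≤ x) : B * (1 + x) ^ 4 ≤ c * x ^ 5 := by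
  have h16 : 16 * B ≤ c * x := by rwa [div_le_iff₀' hc] at hx
  calc B * (1 + x) ^ 4 ≤ B * (2 * x) ^ 4 := by gcongr; linarith
    _ = 16 * B * x ^ 4 := by ring
    _ ≤ c * x * x ^ 4 := by gcongr
    _ = c * x ^ 5 := by ring

theorem one_add_pow_mul_exp_sub_pow_five_le (d : ℕ) (A : ℝ) {c x : ℝ} (hc : 0 < c)
    (hx₁ : 1 ≤ x) (hx : 16 * (|A| + d + 1) / c ≤ x) :
    (1 + x) ^ d * Real.exp (A * (1 + x) ^ 4 - c * x ^ 5) ≤ Real.exp (-1 * x ^ 2) := by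
  have hpow : (1 + x) ^ d ≤ Real.exp (d * (1 + x)) := by
    rw [Real.exp_nat_mul]
    gcongr
    linarith [Real.add_one_le_exp x, Real.add_one_le_exp (1 + x)]
  have hkey := mul_one_add_pow_four_le_mul_pow_five (by positivity) hc hx₁ hx
  have h₁ : 1 + x ≤ (1 + x) ^ 4 := le_self_pow₀ (by linarith) (by norm_num)
  have h₂ : x ^ 2 ≤ (1 + x) ^ 4 := by nlinarith
  have h₃ : A * (1 + x) ^ 4 ≤ |A| * (1 + x) ^ 4 := by gcongr; exact le_abs_self A
  have h₄ : (d : ℝ) * (1 + x) ≤ d * (1 + x) ^ 4 := by gcongr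
  calc (1 + x) ^ d * Real.exp (A * (1 + x) ^ 4 - c * x ^ 5)
      ≤ Real.exp (d * (1 + x)) * Real.exp (A * (1 + x) ^ 4 - c * x ^ 5) := by gcongr
    _ ≤ Real.exp (-1 * x ^ 2) := by
      rw [← Real.exp_add]; gcongr; nlinarith

theorem integrable_one_add_abs_pow_mul_exp_sub_pow_five (d : ℕ) (A : ℝ) {c : ℝ} (hc : 0 < c) :
    Integrable fun u : ℝ => (1 + |u|) ^ d * Real.exp (A * (1 + |u|) ^ 4 - c * |u| ^ 5) := by
  refine (Continuous.locallyIntegrable (by fun_prop)).integrable_of_isBigO_cocompact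
    (Asymptotics.IsBigO.of_bound' ?_) ((integrable_exp_neg_mul_sq one_pos).integrableAtFilter _)
  filter_upwards [tendsto_norm_cocompact_atTop.eventually_ge_atTop
    (max 1 (16 * (|A| + d + 1) / c))] with u hu
  rw [Real.norm_of_nonneg (by positivity), Real.norm_of_nonneg (Real.exp_pos _).le, ← sq_abs u]
  exact one_add_pow_mul_exp_sub_pow_five_le d A hc (le_of_max_le_left hu) (le_of_max_le_right hu)

noncomputable def phase (s X Y : ℝ) (t : ℂ) : ℂ :=
  I * (-(Y : ℂ) * t ^ 2 - (X : ℂ) * t ^ 4 / 2 + 4 * t ^ 5 / (15 * (s : ℂ)))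

noncomputable def phaseEnvelope (s a b : ℝ) (t : ℂ) : ℝ :=
  Real.exp (a * ‖t‖ ^ 2 + b * ‖t‖ ^ 4 + (I * (4 * t ^ 5 / (15 * (s : ℂ)))).re)

theorem continuous_phase (s X Y : ℝ) : Continuous (phase s X Y) := by
  unfold phase; fun_prop

theorem continuous_phaseEnvelope (s a b : ℝ) : Continuous (phaseEnvelope s a b) := by
  unfold phaseEnvelope; fun_prop

theorem hasDerivAt_cexp_phase_right (s X Y : ℝ) (t : ℂ) :
    HasDerivAt (fun y : ℝ => cexp (phase s X y t)) (-I * t ^ 2 * cexp (phase s X Y t)) Y := by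
  have h := ((hasDerivAt_id Y).ofReal_comp.const_mul (-I * t ^ 2)).add_const
    (I * (-(X : ℂ) * t ^ 4 / 2 + 4 * t ^ 5 / (15 * (s : ℂ))))
  convert h.cexp using 1
  · funext y; simp only [phase, id]; ring_nf
  · simp only [phase, id, ofReal_one]; ring_nf

theorem hasDerivAt_cexp_phase_left (s X Y : ℝ) (t : ℂ) :
    HasDerivAt (fun x : ℝ => cexp (phase s x Y t)) (-I * t ^ 4 / 2 * cexp (phase s X Y t)) X := by
  have h := ((hasDerivAt_id X).ofReal_comp.const_mul (-I * t ^ 4 / 2)).add_const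
    (I * (-(Y : ℂ) * t ^ 2 + 4 * t ^ 5 / (15 * (s : ℂ))))
  convert h.cexp using 1
  · funext x; simp only [phase, id]; ring_nf
  · simp only [phase, id, ofReal_one]; ring_nf

theorem norm_cexp_phase_le {s X Y a b : ℝ} (ha : |Y| ≤ a) (hb : |X| / 2 ≤ b) (t : ℂ) :
    ‖cexp (phase s X Y t)‖ ≤ phaseEnvelope s a b t := by
  rw [Complex.norm_exp, phaseEnvelope]
  gcongr
  have hquartic :
      (I * (-(Y : ℂ) * t ^ 2 - (X : ℂ) * t ^ 4 / 2)).re ≤ a * ‖t‖ ^ 2 + b * ‖t‖ ^ 4 :=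
    calc _ ≤ ‖I * (-(Y : ℂ) * t ^ 2 - (X : ℂ) * t ^ 4 / 2)‖ := re_le_norm _
      _ ≤ |Y| * ‖t‖ ^ 2 + |X| / 2 * ‖t‖ ^ 4 := by
        rw [norm_mul, norm_I, one_mul]
        refine (norm_sub_le _ _).trans_eq ?_
        simp only [neg_mul, norm_neg, norm_mul, norm_real, norm_eq_abs, norm_pow, norm_div,
          Complex.norm_ofNat]
        ring
      _ ≤ a * ‖t‖ ^ 2 + b * ‖t‖ ^ 4 := by gcongr
  have hsplit : phase s X Y t = I * (-(Y : ℂ) * t ^ 2 - (X : ℂ) * t ^ 4 / 2)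
      + I * (4 * t ^ 5 / (15 * (s : ℂ))) := by rw [phase]; ring
  rw [hsplit, add_re]
  linarith

def HasPolyGrowth (w : ℝ → ℂ) : Prop :=
  ∃ M : ℝ, ∃ d : ℕ, ∀ u, ‖w u‖ ≤ M * (1 + |u|) ^ d

theorem HasPolyGrowth.mul {w v : ℝ → ℂ} (hw : HasPolyGrowth w) (hv : HasPolyGrowth v) :
    HasPolyGrowth fun u => w u * v u := by
  obtain ⟨M, d, hM⟩ := hw
  obtain ⟨N, e, hN⟩ := hv
  refine ⟨M * N, d + e, fun u => ?_⟩
  calc ‖w u * v u‖ ≤ M * (1 + |u|) ^ d * (N * (1 + |u|) ^ e) := by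
        rw [norm_mul]; exact mul_le_mul (hM u) (hN u) (norm_nonneg _) ((norm_nonneg _).trans (hM u))
    _ = M * N * (1 + |u|) ^ (d + e) := by ring

theorem HasPolyGrowth.pow {w : ℝ → ℂ} (hw : HasPolyGrowth w) (n : ℕ) :
    HasPolyGrowth fun u => w u ^ n := by
  induction n with
  | zero => exact ⟨1, 0, fun u => by simp⟩
  | succ n ih => simpa only [pow_succ] using ih.mul hw

structure IsAdmissibleContour (s : ℝ) (φ : ℝ → ℂ) : Prop where
  continuous : Continuous φ
  norm_le : ∃ C, ∀ u, ‖φ u‖ ≤ C * (1 + |u|)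
  re_quintic_le :
    ∃ c > 0, ∃ K, ∀ u, (I * (4 * φ u ^ 5 / (15 * (s : ℂ)))).re ≤ K - c * |u| ^ 5

namespace IsAdmissibleContour

variable {s : ℝ} {φ w : ℝ → ℂ}

theorem hasPolyGrowth (hφ : IsAdmissibleContour s φ) : HasPolyGrowth φ := by
  obtain ⟨C, hC⟩ := hφ.norm_le
  exact ⟨C, 1, by simpa using hC⟩

theorem integrable_norm_mul_phaseEnvelope (hφ : IsAdmissibleContour s φ) (hw : Continuous w)
    (hwg : HasPolyGrowth w) {a b : ℝ} (ha : 0 ≤ a) (hb : 0 ≤ b) :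
    Integrable fun u => ‖w u‖ * phaseEnvelope s a b (φ u) := by
  obtain ⟨C, hC⟩ := hφ.norm_le
  obtain ⟨c, hc, K, hK⟩ := hφ.re_quintic_le
  obtain ⟨M, d, hM⟩ := hwg
  refine ((integrable_one_add_abs_pow_mul_exp_sub_pow_five d (a * C ^ 2 + b * C ^ 4) hc).const_mul
    (M * Real.exp K)).mono'
    (hw.norm.mul ((continuous_phaseEnvelope s a b).comp hφ.continuous)).aestronglyMeasurable
    (ae_of_all _ fun u => ?_)
  have h1 : 1 ≤ 1 + |u| := le_add_of_nonneg_right (abs_nonneg u)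
  have hsq : ‖φ u‖ ^ 2 ≤ C ^ 2 * (1 + |u|) ^ 4 :=
    calc ‖φ u‖ ^ 2 ≤ (C * (1 + |u|)) ^ 2 := by gcongr; exact hC u
      _ ≤ C ^ 2 * (1 + |u|) ^ 4 := by
        rw [mul_pow]
        exact mul_le_mul_of_nonneg_left (pow_le_pow_right₀ h1 (by norm_num)) (sq_nonneg C)
  have hquart : ‖φ u‖ ^ 4 ≤ C ^ 4 * (1 + |u|) ^ 4 := by
    rw [← mul_pow]; gcongr; exact hC u
  unfold phaseEnvelope
  rw [norm_mul, norm_norm, Real.norm_of_nonneg (Real.exp_pos _).le]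
  calc _
      ≤ M * (1 + |u|) ^ d *
          Real.exp (K + ((a * C ^ 2 + b * C ^ 4) * (1 + |u|) ^ 4 - c * |u| ^ 5)) := by
        refine mul_le_mul (hM u) (Real.exp_le_exp.2 ?_) (Real.exp_pos _).le
          ((norm_nonneg _).trans (hM u))
        nlinarith [hK u]
    _ = M * Real.exp K * ((1 + |u|) ^ d *
          Real.exp ((a * C ^ 2 + b * C ^ 4) * (1 + |u|) ^ 4 - c * |u| ^ 5)) := by
        rw [Real.exp_add]; ring

theorem continuous_mul_cexp_phase (hφ : IsAdmissibleContour s φ) (hw : Continuous w) (X Y : ℝ) :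
    Continuous fun u => w u * cexp (phase s X Y (φ u)) :=
  hw.mul ((continuous_phase s X Y).comp hφ.continuous).cexp

theorem integrable_mul_cexp_phase (hφ : IsAdmissibleContour s φ) (hw : Continuous w)
    (hwg : HasPolyGrowth w) (X Y : ℝ) : Integrable fun u => w u * cexp (phase s X Y (φ u)) :=
  (hφ.integrable_norm_mul_phaseEnvelope hw hwg (abs_nonneg Y)
      (div_nonneg (abs_nonneg X) zero_le_two)).mono'
    (hφ.continuous_mul_cexp_phase hw X Y).aestronglyMeasurable
    (ae_of_all _ fun u => by rw [norm_mul]; gcongr; exact norm_cexp_phase_le le_rfl le_rfl _)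

theorem hasDerivAt_integral_mul_cexp_phase_right (hφ : IsAdmissibleContour s φ)
    (hw : Continuous w) (hwg : HasPolyGrowth w) (X Y : ℝ) :
    HasDerivAt (fun y : ℝ => ∫ u, w u * cexp (phase s X y (φ u)))
      (-I * ∫ u, w u * φ u ^ 2 * cexp (phase s X Y (φ u))) Y := by
  have hw₂ : Continuous fun u => w u * φ u ^ 2 := hw.mul (hφ.continuous.pow 2)
  rw [← integral_const_mul]
  refine (hasDerivAt_integral_of_dominated_loc_of_deriv_le (Metric.ball_mem_nhds Y one_pos)
    (F' := fun y u => -I * (w u * φ u ^ 2 * cexp (phase s X y (φ u))))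
    (bound := fun u => ‖w u * φ u ^ 2‖ * phaseEnvelope s (|Y| + 1) (|X| / 2) (φ u))
    (Eventually.of_forall fun y => (hφ.continuous_mul_cexp_phase hw X y).aestronglyMeasurable)
    (hφ.integrable_mul_cexp_phase hw hwg X Y)
    ((hφ.continuous_mul_cexp_phase hw₂ X Y).const_smul (-I)).aestronglyMeasurable
    (ae_of_all _ fun u y hy => ?_)
    (hφ.integrable_norm_mul_phaseEnvelope hw₂ (hwg.mul (hφ.hasPolyGrowth.pow 2))
      (by positivity) (by positivity))
    (ae_of_all _ fun u y _ => ?_)).2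
  · have hyY : |y| ≤ |Y| + 1 := by
      rw [Metric.mem_ball, Real.dist_eq] at hy
      linarith [abs_sub_abs_le_abs_sub y Y]
    rw [norm_mul, norm_neg, norm_I, one_mul, norm_mul _ (cexp _)]
    gcongr
    exact norm_cexp_phase_le hyY le_rfl _
  · exact ((hasDerivAt_cexp_phase_right s X y (φ u)).const_mul (w u)).congr_deriv (by ring)

theorem hasDerivAt_integral_mul_cexp_phase_left (hφ : IsAdmissibleContour s φ)
    (hw : Continuous w) (hwg : HasPolyGrowth w) (X Y : ℝ) :
    HasDerivAt (fun x : ℝ => ∫ u, w u * cexp (phase s x Y (φ u)))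
      (-I / 2 * ∫ u, w u * φ u ^ 4 * cexp (phase s X Y (φ u))) X := by
  have hw₄ : Continuous fun u => w u * φ u ^ 4 := hw.mul (hφ.continuous.pow 4)
  rw [← integral_const_mul]
  refine (hasDerivAt_integral_of_dominated_loc_of_deriv_le (Metric.ball_mem_nhds X one_pos)
    (F' := fun x u => -I / 2 * (w u * φ u ^ 4 * cexp (phase s x Y (φ u))))
    (bound := fun u => ‖w u * φ u ^ 4‖ * phaseEnvelope s |Y| ((|X| + 1) / 2) (φ u))
    (Eventually.of_forall fun x => (hφ.continuous_mul_cexp_phase hw x Y).aestronglyMeasurable)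
    (hφ.integrable_mul_cexp_phase hw hwg X Y)
    ((hφ.continuous_mul_cexp_phase hw₄ X Y).const_smul (-I / 2)).aestronglyMeasurable
    (ae_of_all _ fun u x hx => ?_)
    (hφ.integrable_norm_mul_phaseEnvelope hw₄ (hwg.mul (hφ.hasPolyGrowth.pow 4))
      (abs_nonneg Y) (by positivity))
    (ae_of_all _ fun u x _ => ?_)).2
  · have hxX : |x| / 2 ≤ (|X| + 1) / 2 := by
      rw [Metric.mem_ball, Real.dist_eq] at hx
      linarith [abs_sub_abs_le_abs_sub x X]
    rw [norm_mul, norm_mul _ (cexp _)]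
    have hI : ‖-I / 2‖ ≤ 1 := by norm_num [norm_div]
    calc _ ≤ 1 * (‖w u * φ u ^ 4‖ * ‖cexp (phase s x Y (φ u))‖) := by gcongr
      _ ≤ _ := by rw [one_mul]; gcongr; exact norm_cexp_phase_le le_rfl hxX _
  · exact ((hasDerivAt_cexp_phase_left s x Y (φ u)).const_mul (w u)).congr_deriv (by ring)

end IsAdmissibleContour

theorem exists_norm_le_add_of_one_lt_abs {E : Type*} [NormedAddCommGroup E] {f : ℝ → E}
    (hf : Continuous f) {g : ℝ → ℝ} (hg : ∀ u, 0 ≤ g u)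
    (hfg : ∀ u, 1 < |u| → ‖f u‖ ≤ g u) :
    ∃ C, ∀ u, ‖f u‖ ≤ C + g u := by
  obtain ⟨C, hC⟩ :=
    (isCompact_Icc (a := -1) (b := 1)).exists_bound_of_continuousOn hf.continuousOn
  refine ⟨max C 0, fun u => ?_⟩
  rcases lt_or_ge 1 |u| with hu | hu
  · linarith [hfg u hu, le_max_right C 0]
  · linarith [hC u (abs_le.1 hu), le_max_left C 0, hg u]

theorem deriv_eq_of_eventuallyEq_ofReal_mul {f : ℝ → ℂ} {u : ℝ} {z : ℂ}
    (h : f =ᶠ[nhds u] fun v : ℝ => (v : ℂ) * z) : deriv f u = z := by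
  rw [h.deriv_eq]
  simpa using ((hasDerivAt_id u).ofReal_comp.mul_const z).deriv

theorem cexp_I_mul_nine_pi_div_ten_pow_five : cexp (I * (9 * π / 10)) ^ 5 = I := by
  have h : ((5 : ℕ) : ℂ) * (I * (9 * π / 10)) = π / 2 * I + (2 : ℕ) * (2 * π * I) := by
    push_cast; ring
  rw [← Complex.exp_nat_mul, h, Complex.exp_add, exp_pi_div_two_mul_I,
    exp_nat_mul_two_pi_mul_I, mul_one]

theorem norm_cexp_I_mul_nine_pi_div_ten : ‖cexp (I * (9 * π / 10))‖ = 1 := by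
  simpa using norm_exp_I_mul_ofReal (9 * π / 10)

section Rays

variable {φ : ℝ → ℂ}

theorem exists_eq_abs_mul_of_rays
    (hleft : ∀ u : ℝ, u ≤ -1 → φ u = (-u : ℂ) * cexp (I * (9 * π / 10)))
    (hright : ∀ u : ℝ, 1 ≤ u → φ u = (u : ℂ) * I) {u : ℝ} (hu : 1 ≤ |u|) :
    ∃ ζ : ℂ, ‖ζ‖ = 1 ∧ ζ ^ 5 = I ∧ φ u = ((|u| : ℝ) : ℂ) * ζ := by
  rcases le_abs'.1 hu with hu | hu
  · refine ⟨_, norm_cexp_I_mul_nine_pi_div_ten, cexp_I_mul_nine_pi_div_ten_pow_five, ?_⟩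
    rw [hleft u hu, abs_of_neg (by linarith), ofReal_neg]
  · refine ⟨I, norm_I, by rw [pow_succ, I_pow_four, one_mul], ?_⟩
    rw [hright u hu, abs_of_pos (by linarith)]

theorem norm_deriv_eq_one_of_rays
    (hleft : ∀ u : ℝ, u ≤ -1 → φ u = (-u : ℂ) * cexp (I * (9 * π / 10)))
    (hright : ∀ u : ℝ, 1 ≤ u → φ u = (u : ℂ) * I) {u : ℝ} (hu : 1 < |u|) :
    ‖deriv φ u‖ = 1 := by
  rcases lt_abs.1 hu with hu | hu
  · rw [deriv_eq_of_eventuallyEq_ofReal_mul (eventually_of_mem (Ioi_mem_nhds hu)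
      fun v hv => hright v (le_of_lt hv)), norm_I]
  · have hu' : u < -1 := by linarith
    rw [deriv_eq_of_eventuallyEq_ofReal_mul (z := -cexp (I * (9 * π / 10)))
      (eventually_of_mem (Iio_mem_nhds hu') fun v hv => by rw [hleft v (le_of_lt hv)]; ring),
      norm_neg, norm_cexp_I_mul_nine_pi_div_ten]

theorem I_mul_quintic_eq_of_rays
    (hleft : ∀ u : ℝ, u ≤ -1 → φ u = (-u : ℂ) * cexp (I * (9 * π / 10)))
    (hright : ∀ u : ℝ, 1 ≤ u → φ u = (u : ℂ) * I) {s u : ℝ} (hu : 1 ≤ |u|) :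
    I * (4 * φ u ^ 5 / (15 * (s : ℂ))) = ((-(4 / (15 * s) * |u| ^ 5) : ℝ) : ℂ) := by
  obtain ⟨ζ, -, hζ5, hφu⟩ := exists_eq_abs_mul_of_rays hleft hright hu
  rw [hφu, mul_pow, hζ5]
  push_cast
  linear_combination (4 * ((|u| : ℝ) : ℂ) ^ 5 / (15 * s)) * I_sq

theorem isAdmissibleContour_of_rays {s : ℝ} (hs : 0 < s) (hφ : Continuous φ)
    (hleft : ∀ u : ℝ, u ≤ -1 → φ u = (-u : ℂ) * cexp (I * (9 * π / 10)))
    (hright : ∀ u : ℝ, 1 ≤ u → φ u = (u : ℂ) * I) : IsAdmissibleContour s φ := by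
  refine ⟨hφ, ?_, ?_⟩
  · obtain ⟨C, hC⟩ := exists_norm_le_add_of_one_lt_abs hφ (g := fun u => |u|)
      (fun u => abs_nonneg u) fun u hu => by
        obtain ⟨ζ, hζ, -, hφu⟩ := exists_eq_abs_mul_of_rays hleft hright hu.le
        rw [hφu, norm_mul, hζ, mul_one, norm_real, Real.norm_eq_abs, abs_abs]
    refine ⟨max C 1, fun u => ?_⟩
    nlinarith [hC u, le_max_left C 1, le_max_right C 1, abs_nonneg u]
  · obtain ⟨K, hK⟩ := exists_norm_le_add_of_one_lt_abs (g := fun _ => 0)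
      (f := fun u => (I * (4 * φ u ^ 5 / (15 * (s : ℂ)))).re + 4 / (15 * s) * |u| ^ 5)
      (by fun_prop) (fun _ => le_rfl) fun u hu => by
        rw [I_mul_quintic_eq_of_rays hleft hright hu.le, ofReal_re, neg_add_cancel, norm_zero]
    refine ⟨4 / (15 * s), by positivity, K, fun u => ?_⟩
    linarith [(Real.le_norm_self _).trans (hK u)]

theorem hasPolyGrowth_deriv_of_rays (hφ : ContDiff ℝ 1 φ)
    (hleft : ∀ u : ℝ, u ≤ -1 → φ u = (-u : ℂ) * cexp (I * (9 * π / 10)))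
    (hright : ∀ u : ℝ, 1 ≤ u → φ u = (u : ℂ) * I) : HasPolyGrowth (deriv φ) := by
  obtain ⟨K, hK⟩ := exists_norm_le_add_of_one_lt_abs (hφ.continuous_deriv le_rfl)
    (g := fun _ => 1) (fun _ => zero_le_one) fun _ hu =>
      (norm_deriv_eq_one_of_rays hleft hright hu).le
  exact ⟨K + 1, 0, by simpa using hK⟩

end Rays

/-- With `Γ₃₂` a (piecewise-smooth, here `C¹`) contour from
`e^{i9π/10}∞` to `i∞`, parametrized by `φ : ℝ → ℂ` which coincides with the ray
`u ↦ -u e^{i9π/10}` for `u ≤ -1` and with the ray `u ↦ u i` for `u ≥ 1`, the function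
`Ã₃₂(X,Y) = ∫_{Γ₃₂} t exp(i(-Yt² - Xt⁴/2 + 4t⁵/(15√γ))) dt` is well defined (the
parametrized integrand is absolutely integrable) and satisfies the parabolic wave
equation `∂²Ã₃₂/∂Y² + 2i ∂Ã₃₂/∂X = 0`. -/
theorem Atil32_well_defined_and_pwe (γ : ℝ) (hγ : 0 < γ)
    (φ : ℝ → ℂ) (hφ : ContDiff ℝ 1 φ)
    (hleft : ∀ u : ℝ, u ≤ -1 → φ u = (-u : ℂ) * Complex.exp (I * (9 * Real.pi / 10)))
    (hright : ∀ u : ℝ, 1 ≤ u → φ u = (u : ℂ) * I)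
    (Atil : ℝ → ℝ → ℂ)
    (hdef : ∀ X Y : ℝ, Atil X Y =
      ∫ u : ℝ, φ u *
        Complex.exp (I * (-(Y : ℂ) * (φ u) ^ 2 - (X : ℂ) * (φ u) ^ 4 / 2
          + 4 * (φ u) ^ 5 / (15 * (Real.sqrt γ : ℂ)))) * deriv φ u) :
    (∀ X Y : ℝ, Integrable (fun u : ℝ =>
        φ u *
        Complex.exp (I * (-(Y : ℂ) * (φ u) ^ 2 - (X : ℂ) * (φ u) ^ 4 / 2
          + 4 * (φ u) ^ 5 / (15 * (Real.sqrt γ : ℂ)))) * deriv φ u)) ∧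
    (∀ X Y : ℝ,
      deriv (fun y => deriv (fun y' => Atil X y') y) Y
        + 2 * I * deriv (fun x => Atil x Y) X = 0) := by
  have hΓ := isAdmissibleContour_of_rays (Real.sqrt_pos.2 hγ) hφ.continuous hleft hright
  set w : ℝ → ℂ := fun u => φ u * deriv φ u
  have hw : Continuous w := hφ.continuous.mul (hφ.continuous_deriv le_rfl)
  have hwg : HasPolyGrowth w := hΓ.hasPolyGrowth.mul (hasPolyGrowth_deriv_of_rays hφ hleft hright)
  have hA : Atil = fun X Y => ∫ u, w u * cexp (phase (√γ) X Y (φ u)) := by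
    funext X Y; simp only [hdef, phase, w, mul_right_comm]
  refine ⟨fun X Y => ?_, fun X Y => ?_⟩
  · simpa only [phase, w, mul_right_comm] using hΓ.integrable_mul_cexp_phase hw hwg X Y
  simp only [hA]
  have hYY := (hΓ.hasDerivAt_integral_mul_cexp_phase_right (w := fun u => w u * φ u ^ 2)
    (hw.mul (hφ.continuous.pow 2)) (hwg.mul (hΓ.hasPolyGrowth.pow 2)) X Y).const_mul (-I)
  rw [funext fun y => (hΓ.hasDerivAt_integral_mul_cexp_phase_right hw hwg X y).deriv, hYY.deriv,
    (hΓ.hasDerivAt_integral_mul_cexp_phase_left hw hwg X Y).deriv]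
  have hpow : ∫ u, w u * φ u ^ 2 * φ u ^ 2 * cexp (phase (√γ) X Y (φ u))
      = ∫ u, w u * φ u ^ 4 * cexp (phase (√γ) X Y (φ u)) := by
    congr 1; funext u; ring
  rw [hpow]
  ring
end
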